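/- arXiv:1211.3999 — 2 statements merged into one kernel-verified Lean document; each statement's English description precedes it below -/
import Mathlib

section
/- Let X and Y be random variables on a probability space taking values in a standard Borel space S, and let A be a sub-sigma-field of F. Then |beta(A, σ(X); P) − beta(A, σ(Y); P)| ≤ 2·P(X ≠ Y). -/
open MeasureTheory ProbabilityTheory Filter Set

/-- The absolute regularity (β-mixing) coefficient between two sub-σ-fields. -/
noncomputable def betaMix {Ω : Type*} {mΩ : MeasurableSpace Ω} (P : Measure Ω)
    (𝓐 𝓑 : MeasurableSpace Ω) : ℝ :=
  sSup { x : ℝ | ∃ (I J : ℕ) (f : Fin I → Set Ω) (g : Fin J → Set Ω),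
    (∀ i, MeasurableSet[𝓐] (f i)) ∧ (∀ j, MeasurableSet[𝓑] (g j)) ∧
    Pairwise (Function.onFun Disjoint f) ∧ (⋃ i, f i) = Set.univ ∧
    Pairwise (Function.onFun Disjoint g) ∧ (⋃ j, g j) = Set.univ ∧
    x = (1/2) * ∑ i, ∑ j,
      |(P (f i ∩ g j)).toReal - (P (f i)).toReal * (P (g j)).toReal| }

/-- The strong mixing (α) coefficient between two sub-σ-fields. -/
noncomputable def alphaMix {Ω : Type*} {mΩ : MeasurableSpace Ω} (P : Measure Ω)
    (𝓐 𝓑 : MeasurableSpace Ω) : ℝ :=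
  sSup { x : ℝ | ∃ (A B : Set Ω), MeasurableSet[𝓐] A ∧ MeasurableSet[𝓑] B ∧
    x = |(P (A ∩ B)).toReal - (P A).toReal * (P B).toReal| }

/-- β mixing coefficient of a two-sided sequence with gap `n`. -/
noncomputable def betaSeq {Ω E : Type*} {mΩ : MeasurableSpace Ω} [MeasurableSpace E]
    (X : ℤ → Ω → E) (n : ℕ) (P : Measure Ω) : ℝ :=
  betaMix P (⨆ k : {k : ℤ // k ≤ 0}, MeasurableSpace.comap (X k) inferInstance)
            (⨆ k : {k : ℤ // (n : ℤ) ≤ k}, MeasurableSpace.comap (X k) inferInstance)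

/-- α mixing coefficient of a two-sided sequence with gap `n`. -/
noncomputable def alphaSeq {Ω E : Type*} {mΩ : MeasurableSpace Ω} [MeasurableSpace E]
    (X : ℤ → Ω → E) (n : ℕ) (P : Measure Ω) : ℝ :=
  alphaMix P (⨆ k : {k : ℤ // k ≤ 0}, MeasurableSpace.comap (X k) inferInstance)
             (⨆ k : {k : ℤ // (n : ℤ) ≤ k}, MeasurableSpace.comap (X k) inferInstance)

/-- Strict stationarity of a two-sided sequence. -/
def IsStationarySeq {Ω E : Type*} {mΩ : MeasurableSpace Ω} [MeasurableSpace E]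
    (P : Measure Ω) (X : ℤ → Ω → E) : Prop :=
  ∀ j : ℤ, P.map (fun ω => fun k : ℤ => X (k + j) ω) = P.map (fun ω => fun k : ℤ => X k ω)

/-!
Every finite `σ(X)`-measurable partition has the form `{X ∈ C_j}`, up to an empty block, with `C`
a measurable partition of `S`, and the same `C` gives the `σ(Y)`-measurable partition
`{Y ∈ C_j}`. Swapping one for the other changes each term `|P(A_i ∩ G) - P(A_i) P(G)|` by at most
`P(A_i ∩ D_j) + P(A_i) P(D_j)`, where `D_j = {X ∈ C_j} ∆ {Y ∈ C_j}`. Summing over the partition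
`A_i`, the β-sum moves by at most `∑_j P(D_j)`, and since the `D_j` lie in `{X ≠ Y}` and each
point of it lies in at most two of them, this is at most `2 P(X ≠ Y)`.
-/

open scoped symmDiff Function

structure IsMeasurablePartition {α : Type*} (m : MeasurableSpace α) {n : ℕ}
    (f : Fin n → Set α) : Prop where
  measurableSet : ∀ i, MeasurableSet[m] (f i)
  pairwise_disjoint : Pairwise (Disjoint on f)
  iUnion_eq_univ : ⋃ i, f i = univ

namespace IsMeasurablePartition

variable {α β : Type*} {m m' : MeasurableSpace α} {n : ℕ} {f : Fin n → Set α}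

lemma mono (hf : IsMeasurablePartition m f) (hm : m ≤ m') : IsMeasurablePartition m' f :=
  ⟨fun i => hm _ (hf.measurableSet i), hf.pairwise_disjoint, hf.iUnion_eq_univ⟩

lemma preimage [MeasurableSpace β] {C : Fin n → Set β} (hC : IsMeasurablePartition ‹_› C)
    (Y : α → β) :
    IsMeasurablePartition (MeasurableSpace.comap Y inferInstance) fun j => Y ⁻¹' C j where
  measurableSet j := ⟨C j, hC.measurableSet j, rfl⟩
  pairwise_disjoint _ _ hij := (hC.pairwise_disjoint hij).preimage Y
  iUnion_eq_univ := by rw [← preimage_iUnion, hC.iUnion_eq_univ, preimage_univ]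

lemma cons_compl_iUnion {D : Fin n → Set α} (hm : ∀ i, MeasurableSet[m] (D i))
    (hd : Pairwise (Disjoint on D)) :
    IsMeasurablePartition m (Fin.cons (⋃ i, D i)ᶜ D : Fin (n + 1) → Set α) where
  measurableSet := Fin.cases (MeasurableSet.iUnion hm).compl hm
  pairwise_disjoint i j hij := by
    cases i using Fin.cases <;> cases j using Fin.cases
    · exact absurd rfl hij
    · exact disjoint_compl_left.mono_right (subset_iUnion D _)
    · exact disjoint_compl_right.mono_left (subset_iUnion D _)
    · exact hd fun h => hij (congrArg Fin.succ h)
  iUnion_eq_univ := by rw [iUnion_cons, compl_union_self]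

variable {mα : MeasurableSpace α} {μ : Measure α}

lemma sum_measureReal_inter [IsFiniteMeasure μ] (hf : IsMeasurablePartition mα f) {s : Set α}
    (hs : MeasurableSet s) :
    ∑ i, μ.real (f i ∩ s) = μ.real s := by
  rw [← measureReal_iUnion_fintype (fun i j hij => (hf.pairwise_disjoint hij).mono
      inter_subset_left inter_subset_left) fun i => (hf.measurableSet i).inter hs,
    ← iUnion_inter, hf.iUnion_eq_univ, univ_inter]

lemma sum_measureReal [IsProbabilityMeasure μ] (hf : IsMeasurablePartition mα f) :
    ∑ i, μ.real (f i) = 1 := by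
  simpa using hf.sum_measureReal_inter (μ := μ) MeasurableSet.univ

lemma exists_cons_empty_eq_preimage [MeasurableSpace β] {X : α → β} {J : ℕ}
    {g : Fin J → Set α} (hg : IsMeasurablePartition (MeasurableSpace.comap X inferInstance) g) :
    ∃ C : Fin (J + 1) → Set β,
      IsMeasurablePartition ‹_› C ∧ (fun j => X ⁻¹' C j) = Fin.cons ∅ g := by
  choose B hB hXB using hg.measurableSet
  -- The `B j` may overlap off the range of `X`, so each is trimmed of all the others.
  set D : Fin J → Set β := fun j => B j \ ⋃ (k) (_ : k ≠ j), B k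
  have hXD (j : Fin J) : X ⁻¹' D j = g j := by
    simp only [D, preimage_sdiff, preimage_iUnion, hXB]
    exact sdiff_eq_left.2 (disjoint_iUnion₂_right.2 fun k hk => hg.pairwise_disjoint hk.symm)
  have hD : Pairwise (Disjoint on D) := fun i j hij =>
    (disjoint_sdiff_self_right.mono_left (subset_biUnion_of_mem (u := B) hij)).mono_left
      sdiff_subset
  refine ⟨Fin.cons (⋃ j, D j)ᶜ D,
    cons_compl_iUnion (fun j => (hB j).diff (.iUnion fun k => .iUnion fun _ => hB k)) hD, ?_⟩
  funext j
  cases j using Fin.cases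
  · simp only [Fin.cons_zero, preimage_compl, preimage_iUnion, hXD, hg.iUnion_eq_univ, compl_univ]
  · simp [hXD]

end IsMeasurablePartition

section BetaSum

variable {Ω : Type*} {mΩ : MeasurableSpace Ω} {P : Measure Ω} {I J : ℕ}
  {f : Fin I → Set Ω} {g : Fin J → Set Ω}

variable (P) in
noncomputable def betaSum (f : Fin I → Set Ω) (g : Fin J → Set Ω) : ℝ :=
  (1 / 2) * ∑ i, ∑ j, |P.real (f i ∩ g j) - P.real (f i) * P.real (g j)|

lemma betaSum_nonneg : 0 ≤ betaSum P f g := by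
  unfold betaSum
  positivity

lemma betaSum_cons_empty : betaSum P f (Fin.cons ∅ g) = betaSum P f g := by
  simp [betaSum, Fin.sum_univ_succ]

lemma betaMix_nonneg (𝓐 𝓑 : MeasurableSpace Ω) : 0 ≤ betaMix P 𝓐 𝓑 :=
  Real.sSup_nonneg <| by
    rintro _ ⟨I, J, f, g, -, -, -, -, -, -, rfl⟩
    exact betaSum_nonneg

lemma betaMix_le {𝓐 𝓑 : MeasurableSpace Ω} {c : ℝ} (hc : 0 ≤ c)
    (h : ∀ (I J : ℕ) (f : Fin I → Set Ω) (g : Fin J → Set Ω), IsMeasurablePartition 𝓐 f →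
      IsMeasurablePartition 𝓑 g → betaSum P f g ≤ c) :
    betaMix P 𝓐 𝓑 ≤ c :=
  Real.sSup_le (by
    rintro _ ⟨I, J, f, g, hf, hg, hfd, hfu, hgd, hgu, rfl⟩
    exact h I J f g ⟨hf, hfd, hfu⟩ ⟨hg, hgd, hgu⟩) hc

lemma abs_sub_abs_covariance_le [IsFiniteMeasure P] {F G H : Set Ω} (hF : MeasurableSet F)
    (hG : MeasurableSet G) (hH : MeasurableSet H) :
    |P.real (F ∩ G) - P.real F * P.real G| - |P.real (F ∩ H) - P.real F * P.real H|
      ≤ P.real (F ∩ (G ∆ H)) + P.real F * P.real (G ∆ H) :=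
  calc _ ≤ |(P.real (F ∩ G) - P.real (F ∩ H)) - P.real F * (P.real G - P.real H)| :=
        (abs_sub_abs_le_abs_sub _ _).trans_eq (congrArg _ (by ring))
    _ ≤ |P.real (F ∩ G) - P.real (F ∩ H)| + P.real F * |P.real G - P.real H| :=
        (abs_sub _ _).trans_eq (by rw [abs_mul, abs_of_nonneg measureReal_nonneg])
    _ ≤ _ := by
        rw [inter_symmDiff_distrib_left]
        gcongr <;> apply abs_measureReal_sub_le_measureReal_symmDiff <;> measurability

variable [IsProbabilityMeasure P]

lemma betaSum_le_one (hf : IsMeasurablePartition mΩ f) (hg : IsMeasurablePartition mΩ g) :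
    betaSum P f g ≤ 1 :=
  calc betaSum P f g
      ≤ (1 / 2) * ∑ i, ∑ j, (P.real (g j ∩ f i) + P.real (f i) * P.real (g j)) := by
        unfold betaSum
        gcongr with i _ j _
        refine (abs_sub _ _).trans_eq ?_
        rw [inter_comm, abs_of_nonneg measureReal_nonneg,
          abs_of_nonneg (mul_nonneg measureReal_nonneg measureReal_nonneg)]
    _ = 1 := by
        simp only [Finset.sum_add_distrib, ← Finset.mul_sum, hg.sum_measureReal_inter
          (hf.measurableSet _), hg.sum_measureReal, mul_one, hf.sum_measureReal (μ := P)]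
        norm_num

lemma betaSum_le_add_sum_measureReal_symmDiff (hf : IsMeasurablePartition mΩ f)
    {h : Fin J → Set Ω} (hg : ∀ j, MeasurableSet (g j)) (hh : ∀ j, MeasurableSet (h j)) :
    betaSum P f g ≤ betaSum P f h + ∑ j, P.real (g j ∆ h j) := by
  have hperturb := Finset.sum_le_sum fun i (_ : i ∈ Finset.univ) => Finset.sum_le_sum
    fun j (_ : j ∈ Finset.univ) =>
      abs_sub_abs_covariance_le (P := P) (hf.measurableSet i) (hg j) (hh j)
  have hsum : ∑ i, ∑ j, (P.real (f i ∩ (g j ∆ h j)) + P.real (f i) * P.real (g j ∆ h j))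
      = 2 * ∑ j, P.real (g j ∆ h j) := by
    rw [Finset.sum_comm]
    simp only [Finset.sum_add_distrib, ← Finset.sum_mul, hf.sum_measureReal (μ := P), one_mul,
      hf.sum_measureReal_inter ((hg _).symmDiff (hh _))]
    exact (two_mul _).symm
  simp only [Finset.sum_sub_distrib] at hperturb
  unfold betaSum
  linarith

lemma betaSum_le_betaMix {𝓐 𝓑 : MeasurableSpace Ω} (h𝓐 : 𝓐 ≤ mΩ) (h𝓑 : 𝓑 ≤ mΩ)
    (hf : IsMeasurablePartition 𝓐 f) (hg : IsMeasurablePartition 𝓑 g) :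
    betaSum P f g ≤ betaMix P 𝓐 𝓑 := by
  refine le_csSup ⟨1, ?_⟩
    ⟨I, J, f, g, hf.1, hg.1, hf.2, hf.3, hg.2, hg.3, rfl⟩
  rintro _ ⟨I, J, f, g, hf, hg, hfd, hfu, hgd, hgu, rfl⟩
  exact betaSum_le_one (IsMeasurablePartition.mono ⟨hf, hfd, hfu⟩ h𝓐)
    (IsMeasurablePartition.mono ⟨hg, hgd, hgu⟩ h𝓑)

end BetaSum

section Preimage

variable {Ω S : Type*} {mΩ : MeasurableSpace Ω} [MeasurableSpace S] {P : Measure Ω}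
  [IsFiniteMeasure P] {X Y : Ω → S} {n : ℕ} {C : Fin n → Set S}

lemma sum_measureReal_preimage_sdiff_le (hX : Measurable X) (hY : Measurable Y)
    (hC : ∀ j, MeasurableSet (C j)) (hd : Pairwise (Disjoint on C)) :
    ∑ j, P.real (X ⁻¹' C j \ Y ⁻¹' C j) ≤ P.real {ω | X ω ≠ Y ω} := by
  rw [← measureReal_iUnion_fintype (fun i j hij => ((hd hij).preimage X).mono sdiff_subset
    sdiff_subset) fun j => (hX (hC j)).diff (hY (hC j))]
  exact measureReal_mono
    (iUnion_subset fun j ω hω hXY => hω.2 (show Y ω ∈ C j from hXY ▸ hω.1))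

lemma sum_measureReal_preimage_symmDiff_le (hX : Measurable X) (hY : Measurable Y)
    (hC : ∀ j, MeasurableSet (C j)) (hd : Pairwise (Disjoint on C)) :
    ∑ j, P.real ((X ⁻¹' C j) ∆ (Y ⁻¹' C j)) ≤ 2 * P.real {ω | X ω ≠ Y ω} := by
  have hXY := sum_measureReal_preimage_sdiff_le (P := P) hX hY hC hd
  have hYX := sum_measureReal_preimage_sdiff_le (P := P) hY hX hC hd
  simp only [ne_comm (a := Y _)] at hYX
  have hsplit (j : Fin n) : P.real ((X ⁻¹' C j) ∆ (Y ⁻¹' C j))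
      = P.real (X ⁻¹' C j \ Y ⁻¹' C j) + P.real (Y ⁻¹' C j \ X ⁻¹' C j) :=
    measureReal_symmDiff_eq (hX (hC j)) (hY (hC j))
  simp only [hsplit, Finset.sum_add_distrib]
  linarith

end Preimage

lemma betaMix_comap_le_add {Ω S : Type*} {mΩ : MeasurableSpace Ω} [MeasurableSpace S]
    {P : Measure Ω} [IsProbabilityMeasure P] {X Y : Ω → S} (hX : Measurable X)
    (hY : Measurable Y) {𝓐 : MeasurableSpace Ω} (h𝓐 : 𝓐 ≤ mΩ) :
    betaMix P 𝓐 (MeasurableSpace.comap X inferInstance)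
      ≤ betaMix P 𝓐 (MeasurableSpace.comap Y inferInstance) + 2 * P.real {ω | X ω ≠ Y ω} := by
  refine betaMix_le (add_nonneg (betaMix_nonneg _ _) (by positivity)) fun I J f g hf hg => ?_
  obtain ⟨C, hC, hXC⟩ := hg.exists_cons_empty_eq_preimage
  calc betaSum P f g = betaSum P f fun j => X ⁻¹' C j := by rw [hXC, betaSum_cons_empty]
    _ ≤ betaSum P f (fun j => Y ⁻¹' C j) + ∑ j, P.real ((X ⁻¹' C j) ∆ (Y ⁻¹' C j)) :=
        betaSum_le_add_sum_measureReal_symmDiff (hf.mono h𝓐) (fun j => hX (hC.measurableSet j))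
          fun j => hY (hC.measurableSet j)
    _ ≤ _ := add_le_add (betaSum_le_betaMix h𝓐 hY.comap_le hf (hC.preimage Y))
        (sum_measureReal_preimage_symmDiff_le hX hY hC.measurableSet hC.pairwise_disjoint)

theorem stmt3_general {Ω S : Type*} {mΩ : MeasurableSpace Ω} [MeasurableSpace S]
    (P : Measure Ω) [IsProbabilityMeasure P]
    (X Y : Ω → S) (hX : Measurable X) (hY : Measurable Y)
    (𝓐 : MeasurableSpace Ω) (h𝓐 : 𝓐 ≤ mΩ) :
    |betaMix P 𝓐 (MeasurableSpace.comap X inferInstance)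
      - betaMix P 𝓐 (MeasurableSpace.comap Y inferInstance)|
      ≤ 2 * (P {ω | X ω ≠ Y ω}).toReal := by
  have hXY := betaMix_comap_le_add (P := P) hX hY h𝓐
  have hYX := betaMix_comap_le_add (P := P) hY hX h𝓐
  simp only [ne_comm (a := Y _)] at hYX
  rw [← measureReal_def]
  exact abs_sub_le_iff.2 ⟨by linarith, by linarith⟩

/-- |β(𝓐,σ(X);P) − β(𝓐,σ(Y);P)| ≤ 2 P(X ≠ Y) for Borel-space-valued X, Y. -/
theorem stmt3 {Ω S : Type*} {mΩ : MeasurableSpace Ω} [MeasurableSpace S] (e : S ≃ᵐ ℝ)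
    (P : Measure Ω) [IsProbabilityMeasure P]
    (X Y : Ω → S) (hX : Measurable X) (hY : Measurable Y)
    (𝓐 : MeasurableSpace Ω) (h𝓐 : 𝓐 ≤ mΩ) :
    |betaMix P 𝓐 (MeasurableSpace.comap X inferInstance)
      - betaMix P 𝓐 (MeasurableSpace.comap Y inferInstance)|
      ≤ 2 * (P {ω | X ω ≠ Y ω}).toReal :=
  stmt3_general P X Y hX hY 𝓐 h𝓐
end

section
/- Suppose (H(n), n ≥ 0) is a nonincreasing summable sequence of nonnegative numbers, and X = (X_k, k ∈ ℤ) is a nondegenerate strictly stationary sequence of {0,1}-valued random variables with Σ_{n=1}^∞ alpha(X,n;P) < ∞. Then Σ_{n=1}^∞ E H(X_1 + X_2 + ... + X_n) < ∞. -/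
open MeasureTheory ProbabilityTheory Filter Set

/-!
Write `S m = X₁ + ⋯ + X_m`. Summation by parts gives
`E H(S m) = H m + ∑_{j < m} (H j - H (j + 1)) P(S m ≤ j)`, and since
`∑_j (j + 1) (H j - H (j + 1)) ≤ ∑ H`, it suffices that `∑_m P(S m ≤ j) = O(j + 1)`.
The covariances of the `X_k` are bounded by the mixing coefficients, so `Var (S m) = O(m)` and
Chebyshev gives `P(S m ≤ j) ≤ 1/6` once `m ≥ a j + b`. If `3 m ≤ n`, the event `S n ≤ j` forces
the first and the last `m` terms to have sums `≤ j`, and these blocks are `m + 1` apart, so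
`P(S n ≤ j) ≤ P(S m ≤ j)² + α(m + 1)`. Beyond the threshold this is
`P(S n ≤ j) ≤ P(S (n/3) ≤ j) / 6 + α(n/3 + 1)`, and summing it over `n` bounds
`∑_m P(S m ≤ j)` by `6 (a j + b + 1) + 6 ∑ α`.
-/

lemma sum_natAbs_sub_le_tsum {c : ℕ → ℝ} (hc0 : ∀ n, 0 ≤ c n) (hc : Summable c)
    (s : Finset ℤ) (i : ℤ) :
    ∑ j ∈ s, c (j - i).natAbs ≤ ∑' d : ℤ, c d.natAbs := by
  have hsum : Summable fun d : ℤ => c d.natAbs :=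
    .of_nat_of_neg (by simpa using hc) (by simpa using hc)
  rw [← Finset.sum_image (g := fun j => j - i) (f := fun d : ℤ => c d.natAbs)
    fun a _ b _ h => sub_left_injective h]
  exact hsum.sum_le_tsum _ fun d _ => hc0 _

lemma sum_range_three_mul_div_three (f : ℕ → ℝ) (K : ℕ) :
    ∑ n ∈ Finset.range (3 * K), f (n / 3) = 3 * ∑ d ∈ Finset.range K, f d := by
  induction K with
  | zero => simp
  | succ K ih =>
    rw [show 3 * (K + 1) = 3 * K + 1 + 1 + 1 by ring, Finset.sum_range_succ,
      Finset.sum_range_succ, Finset.sum_range_succ, ih, Finset.sum_range_succ]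
    have h0 : (3 * K) / 3 = K := by omega
    have h1 : (3 * K + 1) / 3 = K := by omega
    have h2 : (3 * K + 1 + 1) / 3 = K := by omega
    rw [h0, h1, h2]
    ring

lemma sum_range_le_of_le_div_three {u a : ℕ → ℝ} {M : ℕ} (hu0 : ∀ n, 0 ≤ u n)
    (hu1 : ∀ n, u n ≤ 1) (ha0 : ∀ n, 0 ≤ a n) (ha : Summable a)
    (hrec : ∀ n, 3 * M ≤ n → u n ≤ u (n / 3) / 6 + a (n / 3)) (N : ℕ) :
    ∑ n ∈ Finset.range N, u n ≤ 6 * M + 6 * ∑' n, a n := by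
  set g : ℕ → ℝ := fun d => u d / 6 + a d
  have hg0 : ∀ d, 0 ≤ g d := fun d => by have := hu0 d; have := ha0 d; positivity
  have hpoint : ∀ n, u n ≤ (if n < 3 * M then 1 else 0) + g (n / 3) := by
    intro n
    by_cases hn : n < 3 * M
    · simpa [hn] using (hu1 n).trans (le_add_of_nonneg_right (hg0 _))
    · simpa [hn] using hrec n (by omega)
  have hhead : ∑ n ∈ Finset.range N, (if n < 3 * M then (1 : ℝ) else 0) ≤ 3 * M := by
    rw [Finset.sum_boole]
    exact_mod_cast (Finset.card_le_card fun n hn => by simp at hn ⊢; omega).trans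
      (Finset.card_range (3 * M)).le
  have htail : ∑ n ∈ Finset.range N, g (n / 3) ≤ 3 * ∑ d ∈ Finset.range N, g d := by
    rw [← sum_range_three_mul_div_three]
    exact Finset.sum_le_sum_of_subset_of_nonneg (Finset.range_subset_range.mpr (by omega))
      fun n _ _ => hg0 _
  have hsplit : ∑ d ∈ Finset.range N, g d
      = (∑ n ∈ Finset.range N, u n) / 6 + ∑ d ∈ Finset.range N, a d := by
    rw [Finset.sum_add_distrib, Finset.sum_div]
  have ha_le : ∑ d ∈ Finset.range N, a d ≤ ∑' n, a n := ha.sum_le_tsum _ fun n _ => ha0 n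
  have htotal := Finset.sum_le_sum fun n (_ : n ∈ Finset.range N) => hpoint n
  rw [Finset.sum_add_distrib] at htotal
  linarith

lemma sum_range_succ_mul_sub (H : ℕ → ℝ) (N : ℕ) :
    ∑ j ∈ Finset.range N, (j + 1 : ℝ) * (H j - H (j + 1))
      = ∑ j ∈ Finset.range N, H j - N * H N := by
  induction N with
  | zero => simp
  | succ N ih =>
    rw [Finset.sum_range_succ, ih, Finset.sum_range_succ]
    push_cast
    ring

lemma summable_sum_range_sub_mul {H : ℕ → ℝ} (hH0 : ∀ n, 0 ≤ H n) (hHmono : Antitone H)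
    (hHsum : Summable H) {v : ℕ → ℕ → ℝ} (hv0 : ∀ m j, 0 ≤ v m j) {C : ℝ}
    (hv : ∀ j N, ∑ m ∈ Finset.range N, v m j ≤ C * (j + 1)) :
    Summable fun m => ∑ j ∈ Finset.range m, (H j - H (j + 1)) * v m j := by
  have hΔ : ∀ j, 0 ≤ H j - H (j + 1) := fun j => sub_nonneg.mpr (hHmono j.le_succ)
  have hC : 0 ≤ C := by simpa using hv 0 0
  refine summable_of_sum_range_le (c := C * ∑' n, H n)
    (fun m => Finset.sum_nonneg fun j _ => mul_nonneg (hΔ j) (hv0 m j)) fun N => ?_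
  calc ∑ m ∈ Finset.range N, ∑ j ∈ Finset.range m, (H j - H (j + 1)) * v m j
      ≤ ∑ m ∈ Finset.range N, ∑ j ∈ Finset.range N, (H j - H (j + 1)) * v m j :=
        Finset.sum_le_sum fun m hm => Finset.sum_le_sum_of_subset_of_nonneg
          (Finset.range_subset_range.mpr (Finset.mem_range.mp hm).le)
          fun j _ _ => mul_nonneg (hΔ j) (hv0 m j)
    _ = ∑ j ∈ Finset.range N, (H j - H (j + 1)) * ∑ m ∈ Finset.range N, v m j := by
        rw [Finset.sum_comm]
        simp only [Finset.mul_sum]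
    _ ≤ ∑ j ∈ Finset.range N, (H j - H (j + 1)) * (C * (j + 1)) :=
        Finset.sum_le_sum fun j _ => mul_le_mul_of_nonneg_left (hv j N) (hΔ j)
    _ = C * (∑ j ∈ Finset.range N, H j - N * H N) := by
        rw [← sum_range_succ_mul_sub, Finset.mul_sum]
        exact Finset.sum_congr rfl fun j _ => by ring
    _ ≤ C * ∑' n, H n := by
        have := hHsum.sum_le_tsum (Finset.range N) fun n _ => hH0 n
        have := mul_nonneg (Nat.cast_nonneg (α := ℝ) N) (hH0 N)
        gcongr
        linarith

lemma sum_range_sub_mul_ite {H : ℕ → ℝ} {s m : ℕ} (hs : s ≤ m) :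
    ∑ j ∈ Finset.range m, (H j - H (j + 1)) * (if s ≤ j then 1 else 0) = H s - H m := by
  induction m with
  | zero => simp [Nat.le_zero.mp hs]
  | succ m ih =>
    rcases hs.lt_or_eq with hs | rfl
    · rw [Finset.sum_range_succ, ih (by omega), if_pos (by omega)]
      ring
    · rw [Finset.sum_range_succ, if_neg (by omega), Finset.sum_eq_zero fun j hj => by
        rw [if_neg (by simp at hj; omega), mul_zero]]
      ring

section Mixing

variable {Ω : Type*} {mΩ : MeasurableSpace Ω} (P : Measure Ω) [IsProbabilityMeasure P]

lemma abs_measureReal_inter_sub_mul_le_one (A B : Set Ω) :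
    |P.real (A ∩ B) - P.real A * P.real B| ≤ 1 := by
  have hAB := measureReal_nonneg (μ := P) (s := A ∩ B)
  have hA := measureReal_nonneg (μ := P) (s := A)
  have hB := measureReal_nonneg (μ := P) (s := B)
  have hAB1 : P.real (A ∩ B) ≤ 1 := measureReal_le_one
  have hA1 : P.real A ≤ 1 := measureReal_le_one
  have hB1 : P.real B ≤ 1 := measureReal_le_one
  rw [abs_le]
  constructor <;> nlinarith

lemma abs_measureReal_inter_sub_le_alphaMix {𝓐 𝓑 : MeasurableSpace Ω} {A B : Set Ω}
    (hA : MeasurableSet[𝓐] A) (hB : MeasurableSet[𝓑] B) :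
    |P.real (A ∩ B) - P.real A * P.real B| ≤ alphaMix P 𝓐 𝓑 :=
  le_csSup ⟨1, by rintro x ⟨A, B, -, -, rfl⟩; exact abs_measureReal_inter_sub_mul_le_one P A B⟩
    ⟨A, B, hA, hB, rfl⟩

lemma alphaMix_nonneg (𝓐 𝓑 : MeasurableSpace Ω) : 0 ≤ alphaMix P 𝓐 𝓑 :=
  (abs_nonneg _).trans <| abs_measureReal_inter_sub_le_alphaMix P
    (@MeasurableSet.empty Ω 𝓐) (@MeasurableSet.empty Ω 𝓑)

lemma covariance_indicator_one {A B : Set Ω} (hA : MeasurableSet A) (hB : MeasurableSet B) :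
    cov[A.indicator 1, B.indicator 1; P] = P.real (A ∩ B) - P.real A * P.real B := by
  have hA2 : MemLp (A.indicator 1) 2 P := (memLp_const (1 : ℝ)).indicator hA
  have hB2 : MemLp (B.indicator 1) 2 P := (memLp_const (1 : ℝ)).indicator hB
  rw [covariance_eq_sub hA2 hB2, ← Set.inter_indicator_one, integral_indicator_one (hA.inter hB),
    integral_indicator_one hA, integral_indicator_one hB]

end Mixing

lemma alphaSeq_nonneg {Ω E : Type*} {mΩ : MeasurableSpace Ω} [MeasurableSpace E] {P : Measure Ω}
    [IsProbabilityMeasure P] (X : ℤ → Ω → E) (n : ℕ) : 0 ≤ alphaSeq X n P :=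
  alphaMix_nonneg P _ _

lemma measurable_iSup_comap {Ω ι E : Type*} [MeasurableSpace E] {p : ι → Prop}
    (X : ι → Ω → E) {k : ι} (hk : p k) :
    Measurable[⨆ i : {i // p i}, MeasurableSpace.comap (X i) inferInstance] (X k) :=
  measurable_iff_comap_le.mpr (le_iSup_of_le ⟨k, hk⟩ le_rfl)

lemma IsStationarySeq.measureReal_shift {Ω E : Type*} {mΩ : MeasurableSpace Ω}
    [MeasurableSpace E] {P : Measure Ω} {X : ℤ → Ω → E} (hstat : IsStationarySeq P X)
    (hmeas : ∀ k, Measurable (X k)) (t : ℤ) {C : Set (ℤ → E)} (hC : MeasurableSet C) :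
    P.real {ω | (fun k => X (k + t) ω) ∈ C} = P.real {ω | (fun k => X k ω) ∈ C} := by
  have h := congrArg (fun μ : Measure (ℤ → E) => μ.real C) (hstat t)
  simp only [map_measureReal_apply (measurable_pi_lambda _ fun k => hmeas _) hC] at h
  exact h

lemma integral_comp_eq_add_sum_sub_mul_measureReal {Ω : Type*} {mΩ : MeasurableSpace Ω}
    (P : Measure Ω) [IsProbabilityMeasure P] {S : Ω → ℕ} (hS : Measurable S) {m : ℕ}
    (hSm : ∀ ω, S ω ≤ m) (H : ℕ → ℝ) :
    ∫ ω, H (S ω) ∂P = H m + ∑ j ∈ Finset.range m, (H j - H (j + 1)) * P.real {ω | S ω ≤ j} := by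
  have hset : ∀ j, MeasurableSet {ω | S ω ≤ j} := fun j => hS measurableSet_Iic
  have hint : ∀ j, Integrable ({ω | S ω ≤ j}.indicator (1 : Ω → ℝ)) P := fun j =>
    (integrable_const (1 : ℝ)).indicator (hset j)
  calc ∫ ω, H (S ω) ∂P
      = ∫ ω, (H m + ∑ j ∈ Finset.range m,
          (H j - H (j + 1)) * {ω | S ω ≤ j}.indicator 1 ω) ∂P := by
        refine integral_congr_ae (ae_of_all _ fun ω => ?_)
        simp only [Set.indicator_apply, Set.mem_ofPred_eq, Pi.one_apply]
        rw [sum_range_sub_mul_ite (hSm ω)]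
        ring
    _ = H m + ∑ j ∈ Finset.range m, (H j - H (j + 1)) * P.real {ω | S ω ≤ j} := by
        rw [integral_add (integrable_const _)
            (integrable_finsetSum _ fun j _ => (hint j).const_mul _),
          integral_finsetSum _ fun j _ => (hint j).const_mul _]
        simp only [integral_const, probReal_univ, one_smul, integral_const_mul,
          integral_indicator_one (hset _)]

noncomputable def partialSumCdf {Ω : Type*} {mΩ : MeasurableSpace Ω} (P : Measure Ω)
    (X : ℤ → Ω → ℕ) (m j : ℕ) : ℝ :=
  P.real {ω | ∑ k ∈ Finset.Icc (1 : ℤ) m, X k ω ≤ j}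

lemma measurableSet_sum_le_iSup_comap {Ω ι : Type*} {p : ℤ → Prop} (X : ℤ → Ω → ℕ)
    (s : Finset ι) {g : ι → ℤ} (hg : ∀ k ∈ s, p (g k)) (j : ℕ) :
    MeasurableSet[⨆ i : {i // p i}, MeasurableSpace.comap (X i) inferInstance]
      {ω | ∑ k ∈ s, X (g k) ω ≤ j} := by
  have hsum : Measurable[⨆ i : {i // p i}, MeasurableSpace.comap (X i) inferInstance]
      fun ω => ∑ k ∈ s, X (g k) ω :=
    Finset.measurable_sum _ fun k hk => measurable_iSup_comap X (hg k hk)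
  exact hsum measurableSet_Iic

section BinarySequence

variable {Ω : Type*} {mΩ : MeasurableSpace Ω} {P : Measure Ω} {X : ℤ → Ω → ℕ}

namespace IsStationarySeq

lemma measureReal_sum_add_le (hstat : IsStationarySeq P X) (hmeas : ∀ k, Measurable (X k))
    (t : ℤ) (m j : ℕ) :
    P.real {ω | ∑ k ∈ Finset.Icc (1 : ℤ) m, X (k + t) ω ≤ j} = partialSumCdf P X m j :=
  hstat.measureReal_shift hmeas t
    ((Finset.measurable_sum _ fun k _ => measurable_pi_apply k) measurableSet_Iic)

lemma measureReal_eq_one (hstat : IsStationarySeq P X) (hmeas : ∀ k, Measurable (X k)) (k : ℤ) :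
    P.real {ω | X k ω = 1} = P.real {ω | X 0 ω = 1} := by
  simpa using hstat.measureReal_shift hmeas k (C := {f | f 0 = 1})
    (measurable_pi_apply 0 (measurableSet_singleton 1))

lemma covariance_indicator_le_alphaSeq [IsProbabilityMeasure P] (hstat : IsStationarySeq P X)
    (hmeas : ∀ k, Measurable (X k)) (i j : ℤ) :
    cov[{ω | X i ω = 1}.indicator 1, {ω | X j ω = 1}.indicator 1; P]
      ≤ alphaSeq X (j - i).natAbs P := by
  wlog hij : i ≤ j generalizing i j
  · rw [covariance_comm, show (j - i).natAbs = (i - j).natAbs by omega]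
    exact this j i (by omega)
  have hone : ∀ k, MeasurableSet {ω | X k ω = 1} := fun k => hmeas k (measurableSet_singleton 1)
  have hpair : P.real ({ω | X i ω = 1} ∩ {ω | X j ω = 1})
      = P.real ({ω | X 0 ω = 1} ∩ {ω | X (j - i) ω = 1}) := by
    simpa [Set.ofPred_and] using
      hstat.measureReal_shift hmeas i (C := {f | f 0 = 1 ∧ f (j - i) = 1})
        ((measurable_pi_apply 0 (measurableSet_singleton 1)).inter
          (measurable_pi_apply (j - i) (measurableSet_singleton 1)))
  have hmix := abs_measureReal_inter_sub_le_alphaMix P (A := {ω | X 0 ω = 1})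
    (B := {ω | X (j - i) ω = 1})
    (measurable_iSup_comap X (p := fun k => k ≤ 0) le_rfl (measurableSet_singleton 1))
    (measurable_iSup_comap X (p := fun k => ((j - i).natAbs : ℤ) ≤ k) (k := j - i) (by omega)
      (measurableSet_singleton 1))
  rw [hstat.measureReal_eq_one hmeas (j - i)] at hmix
  rw [covariance_indicator_one P (hone i) (hone j), hpair, hstat.measureReal_eq_one hmeas i,
    hstat.measureReal_eq_one hmeas j]
  exact (le_abs_self _).trans hmix

lemma variance_sum_indicator_le [IsProbabilityMeasure P] (hstat : IsStationarySeq P X)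
    (hmeas : ∀ k, Measurable (X k)) (hα : Summable fun n => alphaSeq X n P) (s : Finset ℤ) :
    Var[fun ω => ∑ k ∈ s, {ω | X k ω = 1}.indicator 1 ω; P]
      ≤ s.card * ∑' d : ℤ, alphaSeq X d.natAbs P := by
  have hL : ∀ k ∈ s, MemLp ({ω | X k ω = 1}.indicator (1 : Ω → ℝ)) 2 P := fun k _ =>
    (memLp_const (1 : ℝ)).indicator (hmeas k (measurableSet_singleton 1))
  rw [variance_fun_sum' hL]
  calc ∑ i ∈ s, ∑ j ∈ s, cov[{ω | X i ω = 1}.indicator 1, {ω | X j ω = 1}.indicator 1; P]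
      ≤ ∑ i ∈ s, ∑ j ∈ s, alphaSeq X (j - i).natAbs P :=
        Finset.sum_le_sum fun i _ => Finset.sum_le_sum fun j _ =>
          hstat.covariance_indicator_le_alphaSeq hmeas i j
    _ ≤ ∑ _i ∈ s, ∑' d : ℤ, alphaSeq X d.natAbs P :=
        Finset.sum_le_sum fun i _ =>
          sum_natAbs_sub_le_tsum (alphaSeq_nonneg X) hα s i
    _ = s.card * ∑' d : ℤ, alphaSeq X d.natAbs P := by
        rw [Finset.sum_const, nsmul_eq_mul]

lemma partialSumCdf_le_of_le_half_mean [IsProbabilityMeasure P] (hstat : IsStationarySeq P X)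
    (hmeas : ∀ k, Measurable (X k)) (h01 : ∀ k ω, X k ω ≤ 1)
    (hα : Summable fun n => alphaSeq X n P) (hp : 0 < P.real {ω | X 0 ω = 1})
    {m j : ℕ} (hm : 0 < m) (hj : (j : ℝ) ≤ P.real {ω | X 0 ω = 1} * m / 2) :
    partialSumCdf P X m j
      ≤ 4 * (∑' d : ℤ, alphaSeq X d.natAbs P) / (P.real {ω | X 0 ω = 1} ^ 2 * m) := by
  set p := P.real {ω | X 0 ω = 1}
  set A := ∑' d : ℤ, alphaSeq X d.natAbs P
  set s := Finset.Icc (1 : ℤ) m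
  set Z : Ω → ℝ := fun ω => ∑ k ∈ s, {ω | X k ω = 1}.indicator 1 ω
  have hcard : s.card = m := by simp [s]
  have hone : ∀ k, MeasurableSet {ω | X k ω = 1} := fun k => hmeas k (measurableSet_singleton 1)
  have hL : ∀ k ∈ s, MemLp ({ω | X k ω = 1}.indicator (1 : Ω → ℝ)) 2 P := fun k _ =>
    (memLp_const (1 : ℝ)).indicator (hone k)
  have hZX : ∀ ω, Z ω = ((∑ k ∈ s, X k ω : ℕ) : ℝ) := by
    intro ω
    push_cast
    refine Finset.sum_congr rfl fun k _ => ?_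
    rcases Nat.le_one_iff_eq_zero_or_eq_one.mp (h01 k ω) with h | h <;> simp [h]
  have hmean : P[Z] = m * p := by
    rw [integral_finsetSum _ fun k hk => (hL k hk).integrable one_le_two,
      Finset.sum_congr rfl fun k _ => (integral_indicator_one (hone k)).trans
        (hstat.measureReal_eq_one hmeas k), Finset.sum_const, hcard, nsmul_eq_mul]
  have hsub : {ω | ∑ k ∈ s, X k ω ≤ j} ⊆ {ω | p * m / 2 ≤ |Z ω - P[Z]|} := by
    intro ω hω
    have hSj : ((∑ k ∈ s, X k ω : ℕ) : ℝ) ≤ j := by exact_mod_cast hω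
    rw [Set.mem_ofPred_eq, hZX, hmean, abs_sub_comm]
    exact le_abs.mpr (Or.inl (by linarith))
  have hcheb := meas_ge_le_variance_div_sq (memLp_finsetSum s hL) (c := p * m / 2)
    (by positivity)
  calc partialSumCdf P X m j ≤ P.real {ω | p * m / 2 ≤ |Z ω - P[Z]|} := measureReal_mono hsub
    _ ≤ Var[Z; P] / (p * m / 2) ^ 2 := by
        have h := ENNReal.toReal_mono ENNReal.ofReal_ne_top hcheb
        rwa [ENNReal.toReal_ofReal (div_nonneg (variance_nonneg _ _) (by positivity))] at h
    _ ≤ m * A / (p * m / 2) ^ 2 := by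
        gcongr
        simpa [hcard] using hstat.variance_sum_indicator_le hmeas hα s
    _ = 4 * A / (p ^ 2 * m) := by field_simp; ring

lemma partialSumCdf_le_sq_add [IsProbabilityMeasure P] (hstat : IsStationarySeq P X)
    (hmeas : ∀ k, Measurable (X k)) {m n : ℕ} (hmn : 3 * m ≤ n) (j : ℕ) :
    partialSumCdf P X n j ≤ partialSumCdf P X m j ^ 2 + alphaSeq X (m + 1) P := by
  set s := Finset.Icc (1 : ℤ) m
  let C : Set (ℤ → ℕ) := {f | ∑ k ∈ s, f k ≤ j} ∩ {f | ∑ k ∈ s, f (k + (n - m)) ≤ j}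
  have hC : MeasurableSet C :=
    (measurableSet_le (Finset.measurable_sum _ fun k _ => measurable_pi_apply k)
      measurable_const).inter
    (measurableSet_le (Finset.measurable_sum _ fun k _ => measurable_pi_apply (k + (n - m)))
      measurable_const)
  have hsub : {ω | ∑ k ∈ Finset.Icc (1 : ℤ) n, X k ω ≤ j} ⊆ {ω | (fun k => X k ω) ∈ C} := by
    intro ω (hω : ∑ k ∈ Finset.Icc (1 : ℤ) n, X k ω ≤ j)
    constructor
    · exact le_trans (Finset.sum_le_sum_of_subset (Finset.Icc_subset_Icc le_rfl (by omega))) hω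
    · calc ∑ k ∈ s, X (k + (n - m)) ω = ∑ k ∈ s.map (addRightEmbedding ((n : ℤ) - m)), X k ω :=
            (Finset.sum_map s (addRightEmbedding ((n : ℤ) - m)) fun k => X k ω).symm
        _ ≤ ∑ k ∈ Finset.Icc (1 : ℤ) n, X k ω :=
            Finset.sum_le_sum_of_subset fun k hk => by simp [s] at hk ⊢; omega
        _ ≤ j := hω
  -- after the shift by `-m`, the first and the last `m` terms of `X₁ + ⋯ + Xₙ` lie in
  -- `[1 - m, 0]` and `[n - 2m + 1, n - m]`, at distance at least `m + 1`
  have hmix : |P.real ({ω | ∑ k ∈ s, X (k + -(m : ℤ)) ω ≤ j} ∩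
      {ω | ∑ k ∈ s, X (k + ((n - m : ℤ) + -(m : ℤ))) ω ≤ j})
      - P.real {ω | ∑ k ∈ s, X (k + -(m : ℤ)) ω ≤ j}
        * P.real {ω | ∑ k ∈ s, X (k + ((n - m : ℤ) + -(m : ℤ))) ω ≤ j}|
      ≤ alphaSeq X (m + 1) P :=
    abs_measureReal_inter_sub_le_alphaMix P
      (measurableSet_sum_le_iSup_comap X s (p := fun k => k ≤ 0)
        (fun k hk => by simp [s] at hk; omega) j)
      (measurableSet_sum_le_iSup_comap X s (p := fun k => ((m + 1 : ℕ) : ℤ) ≤ k)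
        (fun k hk => by simp [s] at hk; omega) j)
  rw [hstat.measureReal_sum_add_le hmeas, hstat.measureReal_sum_add_le hmeas] at hmix
  calc partialSumCdf P X n j ≤ P.real {ω | (fun k => X k ω) ∈ C} := measureReal_mono hsub
    _ = P.real ({ω | ∑ k ∈ s, X (k + -(m : ℤ)) ω ≤ j} ∩
          {ω | ∑ k ∈ s, X (k + ((n - m : ℤ) + -(m : ℤ))) ω ≤ j}) := by
        rw [← hstat.measureReal_shift hmeas (-m) hC]
        simp only [C, Set.mem_inter_iff, Set.mem_ofPred_eq, add_assoc]
        rfl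
    _ ≤ partialSumCdf P X m j ^ 2 + alphaSeq X (m + 1) P := by
        linarith [le_abs_self (P.real ({ω | ∑ k ∈ s, X (k + -(m : ℤ)) ω ≤ j} ∩
          {ω | ∑ k ∈ s, X (k + ((n - m : ℤ) + -(m : ℤ))) ω ≤ j})
          - partialSumCdf P X m j * partialSumCdf P X m j)]

lemma exists_partialSumCdf_le_one_sixth [IsProbabilityMeasure P] (hstat : IsStationarySeq P X)
    (hmeas : ∀ k, Measurable (X k)) (h01 : ∀ k ω, X k ω ≤ 1)
    (hα : Summable fun n => alphaSeq X n P) (hp : 0 < P.real {ω | X 0 ω = 1}) :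
    ∃ a b : ℝ, 0 ≤ a ∧ 0 ≤ b ∧ ∀ j m : ℕ, a * j + b ≤ m → partialSumCdf P X m j ≤ 1 / 6 := by
  set p := P.real {ω | X 0 ω = 1}
  set A := ∑' d : ℤ, alphaSeq X d.natAbs P
  have hA : 0 ≤ A := tsum_nonneg fun d => alphaSeq_nonneg X _
  refine ⟨2 / p, 24 * A / p ^ 2 + 1, by positivity, by positivity, fun j m hm => ?_⟩
  have hjm : 2 / p * j ≤ m := by linarith [show 0 ≤ 24 * A / p ^ 2 by positivity]
  have hAm : 24 * A / p ^ 2 + 1 ≤ m := by linarith [show 0 ≤ 2 / p * j by positivity]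
  have hj : (j : ℝ) ≤ p * m / 2 := by
    rw [div_mul_eq_mul_div, div_le_iff₀ hp] at hjm
    linarith
  have hm : 0 < m := by
    have : 0 ≤ 24 * A / p ^ 2 := by positivity
    exact_mod_cast (by linarith : (0 : ℝ) < m)
  refine (hstat.partialSumCdf_le_of_le_half_mean hmeas h01 hα hp hm hj).trans ?_
  rw [div_le_iff₀ (by positivity)]
  rw [← le_sub_iff_add_le, div_le_iff₀ (by positivity)] at hAm
  nlinarith

lemma exists_sum_partialSumCdf_le [IsProbabilityMeasure P] (hstat : IsStationarySeq P X)
    (hmeas : ∀ k, Measurable (X k)) (h01 : ∀ k ω, X k ω ≤ 1)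
    (hα : Summable fun n => alphaSeq X n P) (hp : 0 < P.real {ω | X 0 ω = 1}) :
    ∃ C : ℝ, ∀ j N : ℕ, ∑ m ∈ Finset.range N, partialSumCdf P X m j ≤ C * (j + 1) := by
  obtain ⟨a, b, ha, hb, hsmall⟩ := hstat.exists_partialSumCdf_le_one_sixth hmeas h01 hα hp
  set α' := ∑' n, alphaSeq X (n + 1) P
  have hα' : 0 ≤ α' := tsum_nonneg fun n => alphaSeq_nonneg X _
  refine ⟨6 * a + 6 * (b + 1) + 6 * α', fun j N => ?_⟩
  have hv0 : ∀ m, 0 ≤ partialSumCdf P X m j := fun m => measureReal_nonneg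
  have hrec : ∀ n, 3 * ⌈a * j + b⌉₊ ≤ n →
      partialSumCdf P X n j ≤ partialSumCdf P X (n / 3) j / 6 + alphaSeq X (n / 3 + 1) P := by
    intro n hn
    have h3 : ⌈a * j + b⌉₊ ≤ n / 3 := by omega
    have hsm := hsmall j (n / 3) ((Nat.le_ceil _).trans (by exact_mod_cast h3))
    have := hstat.partialSumCdf_le_sq_add hmeas (Nat.mul_div_le n 3) j
    nlinarith [hv0 (n / 3)]
  have hsum := sum_range_le_of_le_div_three (u := fun m => partialSumCdf P X m j)
    (a := fun n => alphaSeq X (n + 1) P) hv0 (fun m => measureReal_le_one)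
    (fun n => alphaSeq_nonneg X (n + 1)) ((summable_nat_add_iff 1).mpr hα) hrec N
  have hceil : (⌈a * j + b⌉₊ : ℝ) ≤ a * j + b + 1 := (Nat.ceil_lt_add_one (by positivity)).le
  have hj : (0 : ℝ) ≤ j := j.cast_nonneg
  nlinarith [mul_nonneg ha hj, mul_nonneg hα' hj, mul_nonneg hb hj]

end IsStationarySeq

end BinarySequence

theorem stmt8_general {Ω : Type*} {mΩ : MeasurableSpace Ω} (P : Measure Ω) [IsProbabilityMeasure P]
    (H : ℕ → ℝ) (hH0 : ∀ n, 0 ≤ H n) (hHmono : Antitone H) (hHsum : Summable H)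
    (X : ℤ → Ω → ℕ) (hmeas : ∀ k, Measurable (X k)) (h01 : ∀ k ω, X k ω ≤ 1)
    (hstat : IsStationarySeq P X)
    (hnondeg1 : P {ω | X 0 ω = 1} ≠ 0)
    (hα : Summable fun n : ℕ => alphaSeq X (n + 1) P) :
    Summable fun n : ℕ =>
      ∫ ω, H (∑ k ∈ Finset.Icc (1 : ℤ) ((n : ℤ) + 1), X k ω) ∂P := by
  have hp : 0 < P.real {ω | X 0 ω = 1} := ENNReal.toReal_pos hnondeg1 (measure_ne_top P _)
  obtain ⟨C, hC⟩ :=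
    hstat.exists_sum_partialSumCdf_le hmeas h01 ((summable_nat_add_iff 1).mp hα) hp
  have hlayer (m : ℕ) : ∫ ω, H (∑ k ∈ Finset.Icc (1 : ℤ) m, X k ω) ∂P
      = H m + ∑ j ∈ Finset.range m, (H j - H (j + 1)) * partialSumCdf P X m j :=
    integral_comp_eq_add_sum_sub_mul_measureReal P (Finset.measurable_sum _ fun k _ => hmeas k)
      (fun ω => (Finset.sum_le_card_nsmul _ _ 1 fun k _ => h01 k ω).trans (by simp)) H
  have hsum : Summable fun m : ℕ => ∫ ω, H (∑ k ∈ Finset.Icc (1 : ℤ) m, X k ω) ∂P := by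
    simp only [hlayer]
    exact hHsum.add (summable_sum_range_sub_mul hH0 hHmono hHsum
      (v := partialSumCdf P X) (fun m j => measureReal_nonneg) hC)
  have hshift := (summable_nat_add_iff 1).mpr hsum
  push_cast at hshift
  exact hshift

/-- Lemma 2.3: Σₙ E H(X₁+⋯+Xₙ) < ∞. -/
theorem stmt8 {Ω : Type*} {mΩ : MeasurableSpace Ω} (P : Measure Ω) [IsProbabilityMeasure P]
    (H : ℕ → ℝ) (hH0 : ∀ n, 0 ≤ H n) (hHmono : Antitone H) (hHsum : Summable H)
    (X : ℤ → Ω → ℕ) (hmeas : ∀ k, Measurable (X k)) (h01 : ∀ k ω, X k ω ≤ 1)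
    (hstat : IsStationarySeq P X)
    (hnondeg1 : P {ω | X 0 ω = 1} ≠ 0) (hnondeg0 : P {ω | X 0 ω = 0} ≠ 0)
    (hα : Summable fun n : ℕ => alphaSeq X (n + 1) P) :
    Summable fun n : ℕ =>
      ∫ ω, H (∑ k ∈ Finset.Icc (1 : ℤ) ((n : ℤ) + 1), X k ω) ∂P :=
  stmt8_general (mΩ := mΩ) P H hH0 hHmono hHsum X hmeas h01 hstat hnondeg1 hα
end
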